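/- Let s = 2 and 0 < ε < 2/3. Then the maximal solution (α, β) of the system with initial conditions α(0) = ε, β(0) = 1 is defined on all of [0, ∞); moreover α(t) → 0 as t → ∞, and there exists β_∞ > 0 such that β(t) → β_∞ as t → ∞. (This is the ODE content of Theorem 1 in the case aλ = 2 with sufficiently short fibers: the Berger sphere collapses to its base S².) -/

import Mathlib

open Real Filter Set Topology
open scoped ENNReal

/-- The vector field of the spinor-flow ODE system on Berger spheres,
with parameter `s = aλ ∈ {2, -2}`. -/
noncomputable def F (s x y : ℝ) : ℝ × ℝ :=
  (-(9/32) * x^3 / y^4 + (s/4) * x^2 / y^3 - (1/4) * x / y^2,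
   (3/32) * x^2 / y^3 - (s/16) * x / y^2)

/-- `(α, β)` is a solution of the system on the set `J`, with `β` never zero. -/
def IsSolutionOn (s : ℝ) (α β : ℝ → ℝ) (J : Set ℝ) : Prop :=
  ∀ t ∈ J, β t ≠ 0 ∧
    HasDerivAt α (F s (α t) (β t)).1 t ∧
    HasDerivAt β (F s (α t) (β t)).2 t
/-- The interval `[0, T)` as a subset of `ℝ`, where `T ∈ (0,∞]`. -/
def domainUpTo (T : ℝ≥0∞) : Set ℝ := {t : ℝ | 0 ≤ t ∧ ENNReal.ofReal t < T}

/-- `(α, β)` is a maximal solution on `[0, T)`: it is a solution there and cannot be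
extended to a solution on a strictly larger interval to the right. -/
def IsMaxSolution (s : ℝ) (α β : ℝ → ℝ) (T : ℝ≥0∞) : Prop :=
  0 < T ∧ IsSolutionOn s α β (domainUpTo T) ∧
    ¬ ∃ (T' : ℝ≥0∞) (α' β' : ℝ → ℝ), T < T' ∧ IsSolutionOn s α' β' (domainUpTo T') ∧
        ∀ t ∈ domainUpTo T, α' t = α t ∧ β' t = β t

/-!
For `s = 2` the system has the first integral `β³ (2β - 3α)² / (β - α)`, which vanishes on the line
`3α = 2β`. In the closed sector `0 ≤ α`, `3α ≤ 2β` both `α` and `β` are nonincreasing, and since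
the first integral is at most `12 β⁴`, conservation keeps `β` above a positive constant. Then
`α' ≥ -C α` keeps `α` positive and conservation keeps `3α < 2β`, so the open sector is invariant.
At a finite endpoint the monotone, bounded components converge to a point with `β > 0`, where local
existence continues the solution; hence it is global. Finally `α' ≤ -α / 24` makes `α` decay
exponentially, and `β` decreases to a positive limit.
-/

lemma antitoneOn_of_hasDerivAt_nonpos {f f' : ℝ → ℝ} {J : Set ℝ} (hJ : Convex ℝ J)
    (hf : ∀ t ∈ J, HasDerivAt f (f' t) t) (hf' : ∀ t ∈ J, f' t ≤ 0) : AntitoneOn f J :=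
  antitoneOn_of_hasDerivWithinAt_nonpos hJ
    (fun t ht ↦ (hf t ht).continuousAt.continuousWithinAt)
    (fun t ht ↦ (hf t (interior_subset ht)).hasDerivWithinAt)
    (fun t ht ↦ hf' t (interior_subset ht))

lemma le_mul_exp_of_hasDerivAt_le {f f' : ℝ → ℝ} {k c : ℝ}
    (hf : ∀ t ∈ Icc 0 c, HasDerivAt f (f' t) t) (hf' : ∀ t ∈ Icc 0 c, f' t ≤ k * f t) :
    ∀ t ∈ Icc 0 c, f t ≤ f 0 * exp (k * t) := by
  have hanti : AntitoneOn (fun t ↦ f t * exp (-(k * t))) (Icc 0 c) := by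
    refine antitoneOn_of_hasDerivAt_nonpos (convex_Icc 0 c)
      (fun t ht ↦ (hf t ht).mul ((((hasDerivAt_id t).const_mul k).neg).exp)) fun t ht ↦ ?_
    simp only [Pi.neg_apply, id, mul_one]
    nlinarith [hf' t ht, exp_pos (-(k * t))]
  intro t ht
  have := hanti (left_mem_Icc.2 (ht.1.trans ht.2)) ht ht.1
  simp only [mul_zero, neg_zero, exp_zero, mul_one] at this
  calc f t = f t * exp (-(k * t)) * exp (k * t) := by rw [mul_assoc, ← exp_add]; simp
    _ ≤ f 0 * exp (k * t) := by gcongr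

lemma pos_of_forall_nonneg_imp_ne_zero {f : ℝ → ℝ} {c : ℝ} (hf : ContinuousOn f (Icc 0 c))
    (h0 : 0 < f 0) (hne : ∀ t ∈ Icc 0 c, (∀ u ∈ Icc 0 t, 0 ≤ f u) → f t ≠ 0) :
    ∀ t ∈ Icc 0 c, 0 < f t := by
  by_contra! ⟨t, ht, hft⟩
  have hS : IsCompact (Icc 0 c ∩ f ⁻¹' Iic 0) :=
    isCompact_Icc.of_isClosed_subset (hf.preimage_isClosed_of_isClosed isClosed_Icc isClosed_Iic)
      inter_subset_left
  obtain ⟨t₁, ⟨ht₁, hft₁⟩, hleast⟩ := hS.exists_isLeast ⟨t, ht, hft⟩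
  have hpos : ∀ u ∈ Ico 0 t₁, 0 < f u := fun u hu ↦ not_le.1 fun hfu ↦
    (hleast ⟨⟨hu.1, hu.2.le.trans ht₁.2⟩, hfu⟩).not_gt hu.2
  have hzero : f t₁ = 0 := by
    obtain ⟨u, hu, hfu⟩ := intermediate_value_Icc' ht₁.1 (hf.mono (Icc_subset_Icc_right ht₁.2))
      ⟨hft₁, h0.le⟩
    rcases hu.2.lt_or_eq with hlt | rfl
    · exact absurd hfu (hpos u ⟨hu.1, hlt⟩).ne'
    · exact hfu
  refine hne t₁ ht₁ (fun u hu ↦ ?_) hzero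
  rcases hu.2.lt_or_eq with hlt | rfl
  · exact (hpos u ⟨hu.1, hlt⟩).le
  · exact hzero.ge

lemma exists_tendsto_nhdsLT_of_antitoneOn {f : ℝ → ℝ} {a b m : ℝ} (hab : a < b)
    (hf : AntitoneOn f (Ico a b)) (hm : ∀ t ∈ Ico a b, m ≤ f t) :
    ∃ l, m ≤ l ∧ Tendsto f (𝓝[<] b) (𝓝 l) := by
  have hne : (Ioo a b).Nonempty := nonempty_Ioo.2 hab
  have hm' : ∀ y ∈ f '' Ioo a b, m ≤ y := by
    rintro _ ⟨t, ht, rfl⟩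
    exact hm t (Ioo_subset_Ico_self ht)
  exact ⟨_, le_csInf (hne.image f) hm', (hf.mono Ioo_subset_Ico_self).tendsto_nhdsWithin_Ioo_left
    hne ⟨m, hm'⟩⟩

lemma exists_tendsto_atTop_of_antitoneOn {f : ℝ → ℝ} {a m : ℝ} (hf : AntitoneOn f (Ici a))
    (hm : ∀ t ∈ Ici a, m ≤ f t) : ∃ l, m ≤ l ∧ Tendsto f atTop (𝓝 l) := by
  set g : ℝ → ℝ := fun t ↦ f (max t a)
  have hg : Antitone g := fun s t hst ↦
    hf (le_max_right s a) (le_max_right t a) (max_le_max hst le_rfl)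
  have hgm : ∀ t, m ≤ g t := fun t ↦ hm _ (le_max_right t a)
  refine ⟨⨅ t, g t, le_ciInf hgm, (tendsto_atTop_ciInf hg ⟨m, ?_⟩).congr' ?_⟩
  · rintro _ ⟨t, rfl⟩
    exact hgm t
  · filter_upwards [eventually_ge_atTop a] with t ht
    simp only [g, max_eq_left ht]

section Extension

variable {E : Type*} [NormedAddCommGroup E] [NormedSpace ℝ E]

lemma hasDerivAt_ite_lt {f g f' : ℝ → E} {b : ℝ} {e : E}
    (hf : ∀ᶠ t in 𝓝[<] b, HasDerivAt f (f' t) t) (hfg : Tendsto f (𝓝[<] b) (𝓝 (g b)))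
    (hf' : Tendsto f' (𝓝[<] b) (𝓝 e)) (hg : HasDerivAt g e b) :
    HasDerivAt (fun t ↦ if t < b then f t else g t) e b := by
  set h : ℝ → E := fun t ↦ if t < b then f t else g t
  set s : Set ℝ := {t | t < b ∧ HasDerivAt f (f' t) t}
  have hs : s ∈ 𝓝[<] b := inter_mem self_mem_nhdsWithin hf
  have hhf : ∀ t ∈ s, h =ᶠ[𝓝 t] f := fun t ht ↦ by
    filter_upwards [Iio_mem_nhds ht.1] with u hu using if_pos hu
  have hderiv : ∀ t ∈ s, HasDerivAt h (f' t) t := fun t ht ↦ ht.2.congr_of_eventuallyEq (hhf t ht)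
  have hleft : HasDerivWithinAt h e (Iic b) b := by
    refine hasDerivWithinAt_Iic_of_tendsto_deriv
      (fun t ht ↦ (hderiv t ht).differentiableAt.differentiableWithinAt) ?_ hs ?_
    · have : h b = g b := if_neg (lt_irrefl b)
      rw [ContinuousWithinAt, this]
      refine (hfg.mono_left (nhdsWithin_mono _ fun t ht ↦ ht.1)).congr' ?_
      filter_upwards [self_mem_nhdsWithin] with t ht using (hhf t ht).eq_of_nhds.symm
    · exact hf'.congr' (eventually_of_mem hs fun t ht ↦ (hderiv t ht).deriv.symm)
  have hright : HasDerivWithinAt h e (Ici b) b :=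
    hg.hasDerivWithinAt.congr (fun t ht ↦ if_neg (not_lt.2 ht)) (if_neg (lt_irrefl b))
  simpa [Iic_union_Ici] using hleft.union hright

variable [CompleteSpace E]

theorem exists_extension_of_tendsto {v : E → E} {γ : ℝ → E} {a T₀ : ℝ} {x₀ : E} {U : Set E}
    (hv : ContDiffAt ℝ 1 v x₀) (hU : U ∈ 𝓝 x₀) (haT₀ : a < T₀)
    (hγ : ∀ t ∈ Ico a T₀, HasDerivAt γ (v (γ t)) t) (hlim : Tendsto γ (𝓝[<] T₀) (𝓝 x₀)) :
    ∃ T₁ > T₀, ∃ γ' : ℝ → E, (∀ t ∈ Ico a T₁, HasDerivAt γ' (v (γ' t)) t) ∧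
      (∀ t ∈ Ico T₀ T₁, γ' t ∈ U) ∧ EqOn γ' γ (Ico a T₀) := by
  obtain ⟨G, hG₀, η, hη, hG⟩ := hv.exists_forall_mem_closedBall_exists_eq_forall_mem_Ioo_hasDerivAt₀ T₀
  have hT₀ : T₀ ∈ Ioo (T₀ - η) (T₀ + η) := ⟨by linarith, by linarith⟩
  have hGU : ∀ᶠ t in 𝓝 T₀, G t ∈ U := (hG T₀ hT₀).continuousAt.preimage_mem_nhds (hG₀ ▸ hU)
  obtain ⟨T₁, hT₁, hsub⟩ := exists_Ico_subset_of_mem_nhds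
    (inter_mem hGU (Ioo_mem_nhds hT₀.1 hT₀.2)) ⟨T₀ + 1, lt_add_one T₀⟩
  refine ⟨T₁, hT₁, fun t ↦ if t < T₀ then γ t else G t, fun t ht ↦ ?_,
    fun t ht ↦ by simpa [not_lt.2 ht.1] using (hsub ht).1, fun t ht ↦ if_pos ht.2⟩
  dsimp only
  rcases lt_trichotomy t T₀ with hlt | rfl | hgt
  · rw [if_pos hlt]
    exact (hγ t ⟨ht.1, hlt⟩).congr_of_eventuallyEq <| by
      filter_upwards [Iio_mem_nhds hlt] with u hu using if_pos hu
  · rw [if_neg (lt_irrefl t), hG₀]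
    refine hasDerivAt_ite_lt ?_ (hG₀ ▸ hlim) (hv.continuousAt.tendsto.comp hlim) (hG₀ ▸ hG t hT₀)
    filter_upwards [Ioo_mem_nhdsLT haT₀] with u hu using hγ u (Ioo_subset_Ico_self hu)
  · rw [if_neg (not_lt.2 hgt.le)]
    exact (hG t (hsub ⟨hgt.le, ht.2⟩).2).congr_of_eventuallyEq <| by
      filter_upwards [Ioi_mem_nhds hgt] with u hu using if_neg (not_lt.2 hu.le)

end Extension

section VectorField

variable {a b : ℝ}

lemma F_two_fst_eq (hb : b ≠ 0) :
    (F 2 a b).1 = -(a * (9 * a ^ 2 - 16 * a * b + 8 * b ^ 2)) / (32 * b ^ 4) := by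
  simp only [F]
  field_simp
  ring

lemma F_two_fst_le (ha : 0 ≤ a) (hab : 3 * a ≤ 2 * b) (hb : 0 < b) :
    (F 2 a b).1 ≤ -(a / (24 * b ^ 2)) := by
  rw [F_two_fst_eq hb.ne', div_le_iff₀ (by positivity)]
  have : 0 ≤ a * ((2 * b - 3 * a) * (8 * b - 9 * a)) := mul_nonneg ha (by nlinarith)
  field_simp
  nlinarith

lemma neg_le_F_two_fst (ha : 0 ≤ a) (hab : 3 * a ≤ 2 * b) (hb : 0 < b) :
    -(a / (4 * b ^ 2)) ≤ (F 2 a b).1 := by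
  rw [F_two_fst_eq hb.ne', le_div_iff₀ (by positivity)]
  have : 0 ≤ a * (a * (16 * b - 9 * a)) := mul_nonneg ha (by nlinarith)
  field_simp
  nlinarith

lemma F_two_snd_nonpos (ha : 0 ≤ a) (hab : 3 * a ≤ 2 * b) (hb : 0 < b) :
    (F 2 a b).2 ≤ 0 := by
  have : (F 2 a b).2 = a * (3 * a - 4 * b) / (32 * b ^ 3) := by
    simp only [F]
    field_simp
    ring
  rw [this]
  exact div_nonpos_of_nonpos_of_nonneg (mul_nonpos_of_nonneg_of_nonpos ha (by linarith))
    (by positivity)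

lemma contDiffAt_F (s : ℝ) {p : ℝ × ℝ} (hp : p.2 ≠ 0) :
    ContDiffAt ℝ 1 (fun p : ℝ × ℝ ↦ F s p.1 p.2) p := by
  simp only [F]
  fun_prop (disch := exact pow_ne_zero _ hp)

end VectorField

noncomputable def firstIntegral (a b : ℝ) : ℝ := b ^ 3 * (2 * b - 3 * a) ^ 2 / (b - a)

lemma firstIntegral_le {a b : ℝ} (ha : 0 ≤ a) (hab : 3 * a ≤ 2 * b) (hb : 0 < b) :
    firstIntegral a b ≤ 12 * b ^ 4 := by
  rw [firstIntegral, div_le_iff₀ (by linarith)]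
  have : (2 * b - 3 * a) ^ 2 ≤ 4 * b ^ 2 := by nlinarith
  have : b ^ 3 * (2 * b - 3 * a) ^ 2 ≤ b ^ 3 * (4 * b ^ 2) := by gcongr
  nlinarith [pow_pos hb 4, pow_pos hb 5]

lemma hasDerivAt_firstIntegral {α β : ℝ → ℝ} {t : ℝ} (hβ : β t ≠ 0) (hβα : β t ≠ α t)
    (hα' : HasDerivAt α (F 2 (α t) (β t)).1 t) (hβ' : HasDerivAt β (F 2 (α t) (β t)).2 t) :
    HasDerivAt (fun u ↦ firstIntegral (α u) (β u)) 0 t := by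
  have hβα' : β t - α t ≠ 0 := sub_ne_zero.2 hβα
  refine (((hβ'.pow 3).mul (((hβ'.const_mul 2).sub (hα'.const_mul 3)).pow 2)).div
    (hβ'.sub hα') hβα').congr_deriv ?_
  simp only [F, Pi.pow_apply, Pi.mul_apply, Pi.sub_apply]
  field_simp
  ring

lemma IsSolutionOn.mono {s : ℝ} {α β : ℝ → ℝ} {J J' : Set ℝ} (hsol : IsSolutionOn s α β J)
    (hJ : J' ⊆ J) : IsSolutionOn s α β J' :=
  fun t ht ↦ hsol t (hJ ht)

lemma domainUpTo_ofReal (r : ℝ) : domainUpTo (ENNReal.ofReal r) = Ico 0 r := by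
  ext t
  simp only [domainUpTo, mem_Ico, ENNReal.ofReal_lt_ofReal_iff']
  constructor
  · exact fun h ↦ ⟨h.1, h.2.1⟩
  · exact fun h ↦ ⟨h.1, h.2, h.1.trans_lt h.2⟩

lemma domainUpTo_top : domainUpTo ⊤ = Ici 0 := by
  ext t
  simp [domainUpTo]

lemma ordConnected_domainUpTo (T : ℝ≥0∞) : (domainUpTo T).OrdConnected :=
  ⟨fun _ hx _ hy _ hu ↦ ⟨hx.1.trans hu.1, (ENNReal.ofReal_le_ofReal hu.2).trans_lt hy.2⟩⟩

lemma Icc_subset_domainUpTo {T : ℝ≥0∞} {t : ℝ} (h0 : 0 ∈ domainUpTo T) (ht : t ∈ domainUpTo T) :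
    Icc 0 t ⊆ domainUpTo T :=
  (ordConnected_domainUpTo T).out h0 ht

lemma isSolutionOn_of_hasDerivAt_prod {s : ℝ} {γ : ℝ → ℝ × ℝ} {J : Set ℝ}
    (hγ : ∀ t ∈ J, HasDerivAt γ (F s (γ t).1 (γ t).2) t) (hne : ∀ t ∈ J, (γ t).2 ≠ 0) :
    IsSolutionOn s (fun t ↦ (γ t).1) (fun t ↦ (γ t).2) J := fun t ht ↦
  ⟨hne t ht, (hasFDerivAt_fst (𝕜 := ℝ) (p := γ t)).comp_hasDerivAt t (hγ t ht),
    (hasFDerivAt_snd (𝕜 := ℝ) (p := γ t)).comp_hasDerivAt t (hγ t ht)⟩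

section Sector

variable {α β : ℝ → ℝ} {J : Set ℝ}

lemma IsSolutionOn.beta_pos_of_sector (hsol : IsSolutionOn 2 α β J)
    (hsec : ∀ t ∈ J, 0 ≤ α t ∧ 3 * α t ≤ 2 * β t) {t : ℝ} (ht : t ∈ J) : 0 < β t :=
  lt_of_le_of_ne (by linarith [hsec t ht]) (hsol t ht).1.symm

lemma IsSolutionOn.antitoneOn_alpha_of_sector (hsol : IsSolutionOn 2 α β J)
    (hsec : ∀ t ∈ J, 0 ≤ α t ∧ 3 * α t ≤ 2 * β t) (hJ : Convex ℝ J) : AntitoneOn α J :=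
  antitoneOn_of_hasDerivAt_nonpos hJ (fun t ht ↦ (hsol t ht).2.1) fun t ht ↦ by
    have hβ := hsol.beta_pos_of_sector hsec ht
    have := F_two_fst_le (hsec t ht).1 (hsec t ht).2 hβ
    have : 0 ≤ α t / (24 * β t ^ 2) := div_nonneg (hsec t ht).1 (by positivity)
    linarith

lemma IsSolutionOn.antitoneOn_beta_of_sector (hsol : IsSolutionOn 2 α β J)
    (hsec : ∀ t ∈ J, 0 ≤ α t ∧ 3 * α t ≤ 2 * β t) (hJ : Convex ℝ J) : AntitoneOn β J :=
  antitoneOn_of_hasDerivAt_nonpos hJ (fun t ht ↦ (hsol t ht).2.2) fun t ht ↦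
    F_two_snd_nonpos (hsec t ht).1 (hsec t ht).2 (hsol.beta_pos_of_sector hsec ht)

lemma IsSolutionOn.firstIntegral_eq_of_sector (hsol : IsSolutionOn 2 α β J)
    (hsec : ∀ t ∈ J, 0 ≤ α t ∧ 3 * α t ≤ 2 * β t)
    (hJ : Convex ℝ J) {t₀ t : ℝ} (ht₀ : t₀ ∈ J) (ht : t ∈ J) (hle : t₀ ≤ t) :
    firstIntegral (α t) (β t) = firstIntegral (α t₀) (β t₀) := by
  have hderiv : ∀ u ∈ J, HasDerivAt (fun u ↦ firstIntegral (α u) (β u)) 0 u := fun u hu ↦ by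
    have hβ := hsol.beta_pos_of_sector hsec hu
    exact hasDerivAt_firstIntegral (hsol u hu).1 (by linarith [hsec u hu]) (hsol u hu).2.1
      (hsol u hu).2.2
  refine le_antisymm (antitoneOn_of_hasDerivAt_nonpos hJ hderiv (fun _ _ ↦ le_rfl) ht₀ ht hle) ?_
  have := antitoneOn_of_hasDerivAt_nonpos hJ (fun u hu ↦ (hderiv u hu).neg)
    (fun _ _ ↦ neg_zero.le) ht₀ ht hle
  simpa using this

end Sector

section Bootstrap

variable {ε c : ℝ} {α β : ℝ → ℝ}

lemma firstIntegral_initial_pos (hε0 : 0 < ε) (hε1 : ε < 2 / 3) : 0 < firstIntegral ε 1 := by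
  have : 0 < 2 * 1 - 3 * ε := by linarith
  unfold firstIntegral
  exact div_pos (by positivity) (by linarith)

lemma IsSolutionOn.beta_bounds_of_sector (hα0 : α 0 = ε) (hβ0 : β 0 = 1)
    (hsol : IsSolutionOn 2 α β (Icc 0 c)) (hsec : ∀ t ∈ Icc 0 c, 0 ≤ α t ∧ 3 * α t ≤ 2 * β t)
    {t : ℝ} (ht : t ∈ Icc 0 c) : firstIntegral ε 1 / 12 ≤ β t ∧ β t ≤ 1 := by
  have h0 : (0 : ℝ) ∈ Icc 0 c := left_mem_Icc.2 (ht.1.trans ht.2)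
  have hβ := hsol.beta_pos_of_sector hsec ht
  have hβ1 : β t ≤ 1 := hβ0 ▸ hsol.antitoneOn_beta_of_sector hsec (convex_Icc 0 c) h0 ht ht.1
  have hE := hsol.firstIntegral_eq_of_sector hsec (convex_Icc 0 c) h0 ht ht.1
  rw [hα0, hβ0] at hE
  have := hE ▸ firstIntegral_le (hsec t ht).1 (hsec t ht).2 hβ
  have : β t ^ 4 ≤ β t := pow_le_of_le_one hβ.le hβ1 (by norm_num)
  constructor <;> linarith

lemma IsSolutionOn.alpha_pos_of_sector (hε0 : 0 < ε) (hε1 : ε < 2 / 3) (hα0 : α 0 = ε)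
    (hβ0 : β 0 = 1) (hc : 0 ≤ c) (hsol : IsSolutionOn 2 α β (Icc 0 c))
    (hsec : ∀ t ∈ Icc 0 c, 0 ≤ α t ∧ 3 * α t ≤ 2 * β t) : 0 < α c := by
  set m := firstIntegral ε 1 / 12
  have hm : 0 < m := div_pos (firstIntegral_initial_pos hε0 hε1) (by norm_num)
  have hbound : ∀ t ∈ Icc 0 c, -(F 2 (α t) (β t)).1 ≤ -(1 / (4 * m ^ 2)) * -α t := by
    intro t ht
    have hβm := (hsol.beta_bounds_of_sector hα0 hβ0 hsec ht).1
    have hβ := hsol.beta_pos_of_sector hsec ht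
    have := neg_le_F_two_fst (hsec t ht).1 (hsec t ht).2 hβ
    have : α t / (4 * β t ^ 2) ≤ α t / (4 * m ^ 2) := by
      gcongr
      exact (hsec t ht).1
    have : α t / (4 * m ^ 2) = 1 / (4 * m ^ 2) * α t := by ring
    linarith
  have := le_mul_exp_of_hasDerivAt_le (fun t ht ↦ (hsol t ht).2.1.neg) hbound c ⟨hc, le_rfl⟩
  simp only [Pi.neg_apply, hα0] at this
  nlinarith [exp_pos (-(1 / (4 * m ^ 2)) * c)]

lemma IsSolutionOn.three_mul_alpha_lt_of_sector (hε0 : 0 < ε) (hε1 : ε < 2 / 3)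
    (hα0 : α 0 = ε) (hβ0 : β 0 = 1) (hc : 0 ≤ c) (hsol : IsSolutionOn 2 α β (Icc 0 c))
    (hsec : ∀ t ∈ Icc 0 c, 0 ≤ α t ∧ 3 * α t ≤ 2 * β t) : 3 * α c < 2 * β c := by
  refine (hsec c ⟨hc, le_rfl⟩).2.lt_of_ne fun h ↦ (firstIntegral_initial_pos hε0 hε1).ne' ?_
  have hE := hsol.firstIntegral_eq_of_sector hsec (convex_Icc 0 c) (left_mem_Icc.2 hc)
    (right_mem_Icc.2 hc) hc
  rw [hα0, hβ0] at hE
  rw [← hE, firstIntegral, h, sub_self]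
  simp

/-- A first exit from the open sector would happen at a point of the closed sector where `α = 0`
or `3α = 2β`, and the two previous lemmas exclude both. -/
lemma IsSolutionOn.mem_sector (hε0 : 0 < ε) (hε1 : ε < 2 / 3) (hα0 : α 0 = ε) (hβ0 : β 0 = 1)
    (hsol : IsSolutionOn 2 α β (Icc 0 c)) :
    ∀ t ∈ Icc 0 c, 0 < α t ∧ 3 * α t < 2 * β t := by
  have hα : ContinuousOn α (Icc 0 c) := fun t ht ↦ (hsol t ht).2.1.continuousAt.continuousWithinAt
  have hβ : ContinuousOn β (Icc 0 c) := fun t ht ↦ (hsol t ht).2.2.continuousAt.continuousWithinAt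
  have hcont : ContinuousOn (fun t ↦ min (α t) (2 * β t - 3 * α t)) (Icc 0 c) := by fun_prop
  have hpos := pos_of_forall_nonneg_imp_ne_zero hcont
    (by simp only [hα0, hβ0]; exact lt_min hε0 (by linarith)) fun t ht hnonneg ↦ by
      have hsec : ∀ u ∈ Icc 0 t, 0 ≤ α u ∧ 3 * α u ≤ 2 * β u := fun u hu ↦ by
        have := hnonneg u hu
        exact ⟨(le_min_iff.1 this).1, by linarith [(le_min_iff.1 this).2]⟩
      have hsol' := hsol.mono (Icc_subset_Icc_right ht.2)
      have h1 := hsol'.alpha_pos_of_sector hε0 hε1 hα0 hβ0 ht.1 hsec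
      have h2 := hsol'.three_mul_alpha_lt_of_sector hε0 hε1 hα0 hβ0 ht.1 hsec
      exact (lt_min h1 (by linarith)).ne'
  exact fun t ht ↦ ⟨(lt_min_iff.1 (hpos t ht)).1, by linarith [(lt_min_iff.1 (hpos t ht)).2]⟩

end Bootstrap

section GlobalSolution

variable {ε : ℝ} {α β : ℝ → ℝ} {T : ℝ≥0∞}

lemma IsSolutionOn.bounds_domainUpTo (hε0 : 0 < ε) (hε1 : ε < 2 / 3) (hα0 : α 0 = ε)
    (hβ0 : β 0 = 1) (hT0 : 0 < T) (hsol : IsSolutionOn 2 α β (domainUpTo T)) :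
    ∀ t ∈ domainUpTo T,
      (0 ≤ α t ∧ 3 * α t ≤ 2 * β t) ∧ firstIntegral ε 1 / 12 ≤ β t ∧ β t ≤ 1 := by
  intro t ht
  have hsol' := hsol.mono (Icc_subset_domainUpTo ⟨le_rfl, by simpa using hT0⟩ ht)
  have hsec : ∀ u ∈ Icc 0 t, 0 ≤ α u ∧ 3 * α u ≤ 2 * β u := fun u hu ↦
    (hsol'.mem_sector hε0 hε1 hα0 hβ0 u hu).imp le_of_lt le_of_lt
  exact ⟨hsec t ⟨ht.1, le_rfl⟩, hsol'.beta_bounds_of_sector hα0 hβ0 hsec ⟨ht.1, le_rfl⟩⟩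

lemma IsSolutionOn.exists_extension (hε0 : 0 < ε) (hε1 : ε < 2 / 3) (hα0 : α 0 = ε)
    (hβ0 : β 0 = 1) (hT0 : 0 < T) (hT : T ≠ ⊤) (hsol : IsSolutionOn 2 α β (domainUpTo T)) :
    ∃ (T' : ℝ≥0∞) (α' β' : ℝ → ℝ), T < T' ∧ IsSolutionOn 2 α' β' (domainUpTo T') ∧
      ∀ t ∈ domainUpTo T, α' t = α t ∧ β' t = β t := by
  have hb := hsol.bounds_domainUpTo hε0 hε1 hα0 hβ0 hT0
  have hJ : domainUpTo T = Ico 0 T.toReal := by rw [← domainUpTo_ofReal, ENNReal.ofReal_toReal hT]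
  have hT₀ : 0 < T.toReal := ENNReal.toReal_pos hT0.ne' hT
  rw [hJ] at hsol hb ⊢
  obtain ⟨A, -, hA⟩ := exists_tendsto_nhdsLT_of_antitoneOn hT₀
    (hsol.antitoneOn_alpha_of_sector (fun t ht ↦ (hb t ht).1) (convex_Ico 0 _))
    fun t ht ↦ (hb t ht).1.1
  obtain ⟨B, hB, hBlim⟩ := exists_tendsto_nhdsLT_of_antitoneOn hT₀
    (hsol.antitoneOn_beta_of_sector (fun t ht ↦ (hb t ht).1) (convex_Ico 0 _))
    fun t ht ↦ (hb t ht).2.1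
  have hB0 : B ≠ 0 := (lt_of_lt_of_le (by linarith [firstIntegral_initial_pos hε0 hε1]) hB).ne'
  obtain ⟨T₁, hT₁, γ, hγ, hγU, hγeq⟩ := exists_extension_of_tendsto (contDiffAt_F 2 hB0)
    ((isOpen_ne_fun continuous_snd continuous_const).mem_nhds hB0) hT₀
    (fun t ht ↦ (hsol t ht).2.1.prodMk (hsol t ht).2.2) (hA.prodMk_nhds hBlim)
  refine ⟨ENNReal.ofReal T₁, fun t ↦ (γ t).1, fun t ↦ (γ t).2, ?_, ?_,
    fun t ht ↦ by simp [hγeq ht]⟩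
  · rw [← ENNReal.ofReal_toReal hT]
    exact (ENNReal.ofReal_lt_ofReal_iff (hT₀.trans hT₁)).2 hT₁
  · rw [domainUpTo_ofReal]
    refine isSolutionOn_of_hasDerivAt_prod hγ fun t ht ↦ ?_
    rcases lt_or_ge t T.toReal with hlt | hge
    · simpa [hγeq ⟨ht.1, hlt⟩] using (hsol t ⟨ht.1, hlt⟩).1
    · exact hγU t ⟨hge, ht.2⟩

lemma IsMaxSolution.eq_top (hε0 : 0 < ε) (hε1 : ε < 2 / 3) (hα0 : α 0 = ε) (hβ0 : β 0 = 1)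
    (hmax : IsMaxSolution 2 α β T) : T = ⊤ := by
  by_contra hT
  exact hmax.2.2 (hmax.2.1.exists_extension hε0 hε1 hα0 hβ0 hmax.1 hT)

lemma IsSolutionOn.alpha_le_of_sector {c : ℝ} (hα0 : α 0 = ε) (hsol : IsSolutionOn 2 α β (Icc 0 c))
    (hsec : ∀ t ∈ Icc 0 c, 0 ≤ α t ∧ 3 * α t ≤ 2 * β t) (hβ1 : ∀ t ∈ Icc 0 c, β t ≤ 1) :
    ∀ t ∈ Icc 0 c, α t ≤ ε * exp (-(1 / 24) * t) := by
  refine hα0 ▸ le_mul_exp_of_hasDerivAt_le (fun t ht ↦ (hsol t ht).2.1) fun t ht ↦ ?_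
  have hβ := hsol.beta_pos_of_sector hsec ht
  have := F_two_fst_le (hsec t ht).1 (hsec t ht).2 hβ
  have : α t / 24 ≤ α t / (24 * β t ^ 2) := by
    gcongr
    · exact (hsec t ht).1
    · nlinarith [hβ1 t ht]
  linarith

end GlobalSolution

/-- For `s = 2` and `0 < ε < 2/3`, the maximal solution with `α(0) = ε`, `β(0) = 1`
exists for all time, `α(t) → 0`, and `β(t) → β_∞ > 0` as `t → ∞`. -/
theorem collapse_s_two_short_fibers (ε : ℝ) (hε0 : 0 < ε) (hε1 : ε < 2/3)
    (α β : ℝ → ℝ) (T : ℝ≥0∞)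
    (hmax : IsMaxSolution 2 α β T) (hα0 : α 0 = ε) (hβ0 : β 0 = 1) :
    T = ⊤ ∧ Tendsto α atTop (𝓝 0) ∧
      ∃ βinf : ℝ, 0 < βinf ∧ Tendsto β atTop (𝓝 βinf) := by
  have hT := hmax.eq_top hε0 hε1 hα0 hβ0
  have hsol := hmax.2.1
  rw [hT] at hsol
  have hb := hsol.bounds_domainUpTo hε0 hε1 hα0 hβ0 ENNReal.zero_lt_top
  rw [domainUpTo_top] at hsol hb
  have hsec : ∀ t ∈ Ici 0, 0 ≤ α t ∧ 3 * α t ≤ 2 * β t := fun t ht ↦ (hb t ht).1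
  refine ⟨hT, ?_, ?_⟩
  · have hdecay : ∀ t ∈ Ici 0, α t ≤ ε * exp (-(1 / 24) * t) := fun t ht ↦
      (hsol.mono Icc_subset_Ici_self).alpha_le_of_sector hα0 (fun u hu ↦ hsec u hu.1)
        (fun u hu ↦ (hb u hu.1).2.2) t ⟨ht, le_rfl⟩
    have hexp : Tendsto (fun t ↦ ε * exp (-(1 / 24) * t)) atTop (𝓝 0) := by
      simpa using (tendsto_exp_atBot.comp
        (tendsto_id.const_mul_atTop_of_neg (by norm_num : -(1 / 24 : ℝ) < 0))).const_mul ε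
    exact tendsto_of_tendsto_of_tendsto_of_le_of_le' tendsto_const_nhds hexp
      (eventually_ge_atTop 0 |>.mono fun t ht ↦ (hsec t ht).1)
      (eventually_ge_atTop 0 |>.mono hdecay)
  · obtain ⟨l, hl, hlim⟩ := exists_tendsto_atTop_of_antitoneOn
      (hsol.antitoneOn_beta_of_sector hsec (convex_Ici 0)) fun t ht ↦ (hb t ht).2.1
    exact ⟨l, lt_of_lt_of_le (by linarith [firstIntegral_initial_pos hε0 hε1]) hl, hlim⟩
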